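/- arXiv:2011.07827 — 8 statements merged into one kernel-verified Lean document; each statement's English description precedes it below -/
import Mathlib

section
/- Let W be a finite set with |W| ≥ 5 and let π be a permutation of W of order 3 (i.e. π ≠ id and π ∘ π ∘ π = id). Then π is conjugate to its inverse by an even permutation: there exists an even permutation γ of W such that γ⁻¹ ∘ π ∘ γ = π⁻¹. -/
open Equiv Equiv.Perm

lemma swap_disjoint_commute {W : Type*} [DecidableEq W] {a b c d : W}
    (hac : a ≠ c) (had : a ≠ d) (hbc : b ≠ c) (hbd : b ≠ d) :
    Commute (Equiv.swap a b) (Equiv.swap c d) := by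
  apply Equiv.Perm.Disjoint.commute
  intro z
  rcases eq_or_ne z a with rfl | hza
  · right; rw [swap_apply_of_ne_of_ne hac had]
  rcases eq_or_ne z b with rfl | hzb
  · right; rw [swap_apply_of_ne_of_ne hbc hbd]
  · left; rw [swap_apply_of_ne_of_ne hza hzb]

lemma comm_of_conj_eq {W : Type*} [DecidableEq W] [Fintype W] {π τ : Equiv.Perm W}
    (hc : π * τ * π⁻¹ = τ) : τ * π * τ⁻¹ = π := by
  rw [mul_inv_eq_iff_eq_mul] at hc
  rw [← hc, mul_assoc]
  simp

/-- In a finite set `W` with at least 5 elements, every permutation of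
order 3 is conjugate to its inverse by an even permutation. -/
theorem stmt1 {W : Type*} [Fintype W] [DecidableEq W]
    (h5 : 5 ≤ Fintype.card W) (π : Equiv.Perm W)
    (hne : π ≠ 1) (h3 : π ^ 3 = 1) :
    ∃ γ ∈ alternatingGroup W, γ⁻¹ * π * γ = π⁻¹ := by
  -- π is conjugate to π⁻¹
  have hconj : IsConj π π⁻¹ := by
    rw [Equiv.Perm.isConj_iff_cycleType_eq, Equiv.Perm.cycleType_inv]
  obtain ⟨σ, hσ'⟩ := isConj_iff.1 hconj
  -- there exists an odd permutation commuting with π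
  have hodd : ∃ τ : Equiv.Perm W, Equiv.Perm.sign τ = -1 ∧ τ * π * τ⁻¹ = π := by
    have h3' : ∀ z : W, π (π (π z)) = z := by
      intro z
      have := congrArg (fun f : Equiv.Perm W => f z) h3
      simpa [pow_succ, Equiv.Perm.mul_apply] using this
    by_cases hfix : ∃ a b : W, a ≠ b ∧ π a = a ∧ π b = b
    · obtain ⟨a, b, hab, ha, hb⟩ := hfix
      refine ⟨Equiv.swap a b, Equiv.Perm.sign_swap hab, comm_of_conj_eq ?_⟩
      have e : Equiv.swap (π a) (π b) = π * Equiv.swap a b * π⁻¹ :=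
        Equiv.swap_apply_apply π a b
      rw [ha, hb] at e
      exact e.symm
    · -- at most one fixed point, so support has card ≥ 4
      push_neg at hfix
      have hsupp : 4 ≤ π.support.card := by
        have hcompl : π.supportᶜ.card ≤ 1 := by
          rw [Finset.card_le_one]
          intro a ha b hb
          simp only [Finset.mem_compl, Equiv.Perm.mem_support, not_not] at ha hb
          by_contra h
          exact (hfix a b h ha) hb
        have := Finset.card_compl_add_card π.support
        omega
      have hxex : π.support.Nonempty := by
        rw [Finset.nonempty_iff_ne_empty, ne_eq, Equiv.Perm.support_eq_empty_iff]
        exact hne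
      obtain ⟨x, hx⟩ := hxex
      rw [Equiv.Perm.mem_support] at hx
      have h1 : π x ≠ x := hx
      have h2 : π (π x) ≠ x := by
        intro h
        have := congrArg π h
        rw [h3' x] at this
        exact h1 this.symm
      have h2' : π (π x) ≠ π x := fun h => h1 (π.injective h)
      -- find y outside the cycle of x
      have hns : ¬ π.support ⊆ {x, π x, π (π x)} := by
        intro hsub
        have hcard := Finset.card_le_card hsub
        have hle : ({x, π x, π (π x)} : Finset W).card ≤ 3 := by
          apply (Finset.card_insert_le _ _).trans
          have := Finset.card_insert_le (π x) ({π (π x)} : Finset W)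
          simp only [Finset.card_singleton] at this
          omega
        omega
      obtain ⟨y, hy, hyc⟩ := Finset.not_subset.1 hns
      simp only [Finset.mem_insert, Finset.mem_singleton, not_or] at hyc
      obtain ⟨hyx, hy1, hy2⟩ := hyc
      rw [Equiv.Perm.mem_support] at hy
      have k1 : π y ≠ y := hy
      have k2 : π (π y) ≠ y := by
        intro h
        have := congrArg π h
        rw [h3' y] at this
        exact k1 this.symm
      have k2' : π (π y) ≠ π y := fun h => k1 (π.injective h)
      -- cross distinctness
      have c1 : π y ≠ x := fun h => hy2 (by rw [← h, h3' y])
      have c2 : π y ≠ π x := fun h => hyx (π.injective h)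
      have c3 : π y ≠ π (π x) := fun h => hy1 (π.injective h)
      have d1 : π (π y) ≠ x := fun h => hy1 (by rw [← h, h3' y])
      have d2 : π (π y) ≠ π x := fun h => c1 (π.injective h)
      have d3 : π (π y) ≠ π (π x) := fun h => hyx (π.injective (π.injective h))
      refine ⟨Equiv.swap x y * Equiv.swap (π x) (π y) * Equiv.swap (π (π x)) (π (π y)),
        ?_, comm_of_conj_eq ?_⟩
      · rw [map_mul, map_mul, Equiv.Perm.sign_swap (Ne.symm hyx),
          Equiv.Perm.sign_swap (Ne.symm c2), Equiv.Perm.sign_swap (Ne.symm d3)]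
        decide
      · have e1 : π * Equiv.swap x y * π⁻¹ = Equiv.swap (π x) (π y) :=
          (Equiv.swap_apply_apply π x y).symm
        have e2 : π * Equiv.swap (π x) (π y) * π⁻¹ = Equiv.swap (π (π x)) (π (π y)) :=
          (Equiv.swap_apply_apply π (π x) (π y)).symm
        have e3 : π * Equiv.swap (π (π x)) (π (π y)) * π⁻¹ = Equiv.swap x y := by
          have := (Equiv.swap_apply_apply π (π (π x)) (π (π y))).symm
          rwa [h3' x, h3' y] at this
        have key : π * (Equiv.swap x y * Equiv.swap (π x) (π y) *
            Equiv.swap (π (π x)) (π (π y))) * π⁻¹ =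
            (π * Equiv.swap x y * π⁻¹) * (π * Equiv.swap (π x) (π y) * π⁻¹) *
            (π * Equiv.swap (π (π x)) (π (π y)) * π⁻¹) := by
          group
        rw [key, e1, e2, e3]
        have com12 : Commute (Equiv.swap x y) (Equiv.swap (π x) (π y)) :=
          swap_disjoint_commute (Ne.symm h1) (Ne.symm c1) hy1 (Ne.symm k1)
        have com13 : Commute (Equiv.swap x y) (Equiv.swap (π (π x)) (π (π y))) :=
          swap_disjoint_commute (Ne.symm h2) (Ne.symm d1) hy2 (Ne.symm k2)
        calc Equiv.swap (π x) (π y) * Equiv.swap (π (π x)) (π (π y)) * Equiv.swap x y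
            = Equiv.swap (π x) (π y) * (Equiv.swap (π (π x)) (π (π y)) * Equiv.swap x y) := by
              rw [mul_assoc]
          _ = Equiv.swap (π x) (π y) * (Equiv.swap x y * Equiv.swap (π (π x)) (π (π y))) := by
              rw [com13.eq]
          _ = Equiv.swap (π x) (π y) * Equiv.swap x y * Equiv.swap (π (π x)) (π (π y))  := by
              rw [mul_assoc]
          _ = Equiv.swap x y * Equiv.swap (π x) (π y) * Equiv.swap (π (π x)) (π (π y)) := by
              rw [com12.eq]
  obtain ⟨τ, hsgn, hτ⟩ := hodd
  rcases Int.units_eq_one_or (Equiv.Perm.sign σ) with hs | hs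
  · refine ⟨σ⁻¹, ?_, ?_⟩
    · rw [Equiv.Perm.mem_alternatingGroup, map_inv, hs]; rfl
    · rw [inv_inv]; exact hσ'
  · refine ⟨(σ * τ)⁻¹, ?_, ?_⟩
    · rw [Equiv.Perm.mem_alternatingGroup, map_inv, map_mul, hs, hsgn]; decide
    · rw [inv_inv]
      calc (σ * τ) * π * (σ * τ)⁻¹ = σ * (τ * π * τ⁻¹) * σ⁻¹ := by group
        _ = σ * π * σ⁻¹ := by rw [hτ]
        _ = π⁻¹ := hσ'
end

section
/- Let A be a finite nonempty set. For each i ∈ A let I_i = {B ⊆ A : i ∈ B}, a collection of subsets of A. Let 𝒞 be the smallest collection of subsets of the power set 𝒫(A) that contains I_i for every i ∈ A and is closed under the three operations (C, C') ↦ C ∪ C', (C, C') ↦ C ∩ C', and (C, C') ↦ C ∩ (𝒫(A) ∖ C'). Then 𝒞 is exactly the collection {C ⊆ 𝒫(A) : ∅ ∉ C} of all families of subsets of A that do not contain the empty set. -/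
/-- The inductive closure of the collections `I_i = {B ⊆ A | i ∈ B}` under union,
intersection, and intersection with complement. -/
inductive GenFam {A : Type*} : Set (Set A) → Prop
  | base (i : A) : GenFam {B : Set A | i ∈ B}
  | union {C C' : Set (Set A)} : GenFam C → GenFam C' → GenFam (C ∪ C')
  | inter {C C' : Set (Set A)} : GenFam C → GenFam C' → GenFam (C ∩ C')
  | sdiff {C C' : Set (Set A)} : GenFam C → GenFam C' → GenFam (C ∩ C'ᶜ)

/-!
Every generated family omits `∅`, since each `I_i` does and the three operations keep `∅` out.
Conversely a family omitting `∅` is a finite union of singletons `{B}` with `B` nonempty, and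
`{B} = I_b ∩ ⋂_{i ∈ B} I_i ∩ ⋂_{i ∉ B} I_iᶜ` for any `b ∈ B`; the empty family is `I_i ∩ I_iᶜ`.
-/

namespace GenFam

variable {A : Type*}

theorem empty_notMem {C : Set (Set A)} (h : GenFam C) : ∅ ∉ C := by
  induction h with
  | base i => simp
  | union _ _ ih ih' => exact fun hC => hC.elim ih ih'
  | inter _ _ ih _ => exact fun hC => ih hC.1
  | sdiff _ _ ih _ => exact fun hC => ih hC.1

theorem empty [Nonempty A] : GenFam (∅ : Set (Set A)) := by
  obtain ⟨i⟩ := ‹Nonempty A›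
  simpa using sdiff (base i) (base i)

theorem sep_subset {D : Set (Set A)} (hD : GenFam D) {B : Set A} (hB : B.Finite) :
    GenFam {C ∈ D | B ⊆ C} := by
  induction B, hB using Set.Finite.induction_on with
  | empty => simpa using hD
  | @insert a B _ _ ih =>
    convert ih.inter (base a) using 1
    ext C
    simp only [Set.insert_subset_iff, Set.mem_inter_iff, Set.mem_ofPred_eq]
    tauto

theorem sep_disjoint {D : Set (Set A)} (hD : GenFam D) {S : Set A} (hS : S.Finite) :
    GenFam {C ∈ D | Disjoint S C} := by
  induction S, hS using Set.Finite.induction_on with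
  | empty => simpa using hD
  | @insert a S _ _ ih =>
    convert ih.sdiff (base a) using 1
    ext C
    simp only [Set.disjoint_insert_left, Set.mem_inter_iff, Set.mem_compl_iff,
      Set.mem_ofPred_eq]
    tauto

theorem singleton [Finite A] {B : Set A} (hB : B.Nonempty) : GenFam {B} := by
  obtain ⟨b, hb⟩ := hB
  convert ((base b).sep_subset B.toFinite).sep_disjoint Bᶜ.toFinite using 1
  ext C
  simp only [Set.mem_singleton_iff, Set.mem_ofPred_eq,
    Set.disjoint_compl_left_iff_subset]
  constructor
  · rintro rfl
    exact ⟨⟨hb, le_rfl⟩, le_rfl⟩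
  · rintro ⟨⟨-, hBC⟩, hCB⟩
    exact hCB.antisymm hBC

theorem of_empty_notMem [Nonempty A] [Finite A] {C : Set (Set A)} (hC : ∅ ∉ C) : GenFam C := by
  induction C, C.toFinite using Set.Finite.induction_on with
  | empty => exact empty
  | @insert B C _ _ ih =>
    rw [Set.insert_eq]
    have hB : B.Nonempty := Set.nonempty_iff_ne_empty.mpr fun h => hC (h ▸ Set.mem_insert B C)
    exact (singleton hB).union (ih fun h => hC (Set.mem_insert_of_mem B h))

end GenFam

/-- For a finite nonempty set `A`, the smallest collection of subsets of the
power set of `A` containing all `I_i = {B ⊆ A | i ∈ B}` and closed under `∪`, `∩`, and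
`∩ ·ᶜ` is exactly the collection of all families of subsets of `A` not containing `∅`. -/
theorem stmt2 {A : Type*} [Fintype A] [Nonempty A] :
    {C : Set (Set A) | GenFam C} = {C : Set (Set A) | ∅ ∉ C} :=
  Set.ext fun _ => ⟨GenFam.empty_notMem, GenFam.of_empty_notMem⟩
end

section
/- Let G be a perfect group, let A be a finite set with |A| ≥ 3, and let H be a group acting transitively on A. Consider the following bijections of the set A × G × 𝒫(A): for g ∈ G and a ∈ A, define p_{g,a}(a', g', X) = (a', g·g', X) if a' = a and a ∈ X, and p_{g,a}(a', g', X) = (a', g', X) otherwise; for π ∈ H, define q_π(a', g', X) = (π • a', g', X). Then for every g ∈ G and every a ∈ A, the subgroup of the symmetric group of A × G × 𝒫(A) generated by all the p_{g',a'} (g' ∈ G, a' ∈ A) and all the q_π (π ∈ H) contains the bijection r_{g,a} defined by r_{g,a}(a', g', X) = (a', g·g', X) if X ≠ ∅ and a' = a, and r_{g,a}(a', g', X) = (a', g', X) otherwise. -/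
open Classical in
/-- The bijection `p_{g,a}` of `A × G × 𝒫(A)`: left-multiply the `G`-component by `g`
exactly when the `A`-component equals `a` and `a` belongs to the `𝒫(A)`-component. -/
noncomputable def pMap {G A : Type*} [Group G] (g : G) (a : A) :
    Equiv.Perm (A × G × Set A) where
  toFun x := if x.1 = a ∧ a ∈ x.2.2 then (x.1, g * x.2.1, x.2.2) else x
  invFun x := if x.1 = a ∧ a ∈ x.2.2 then (x.1, g⁻¹ * x.2.1, x.2.2) else x
  left_inv := by
    intro x
    by_cases h : x.1 = a ∧ a ∈ x.2.2
    · obtain ⟨h1, h2⟩ := h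
      subst h1
      simp [h2]
    · simp [h]
  right_inv := by
    intro x
    by_cases h : x.1 = a ∧ a ∈ x.2.2
    · obtain ⟨h1, h2⟩ := h
      subst h1
      simp [h2]
    · simp [h]

/-- The bijection `q_π` of `A × G × 𝒫(A)`: act by `π ∈ H` on the `A`-component. -/
def qMap {G A H : Type*} [Group G] [Group H] [MulAction H A] (π : H) :
    Equiv.Perm (A × G × Set A) where
  toFun x := (π • x.1, x.2)
  invFun x := (π⁻¹ • x.1, x.2)
  left_inv := by intro x; simp
  right_inv := by intro x; simp

open Classical in
/-- The bijection `r_{g,a}` of `A × G × 𝒫(A)`: left-multiply the `G`-component by `g`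
exactly when the `𝒫(A)`-component is nonempty and the `A`-component equals `a`. -/
noncomputable def rMap {G A : Type*} [Group G] (g : G) (a : A) :
    Equiv.Perm (A × G × Set A) where
  toFun x := if x.2.2 ≠ ∅ ∧ x.1 = a then (x.1, g * x.2.1, x.2.2) else x
  invFun x := if x.2.2 ≠ ∅ ∧ x.1 = a then (x.1, g⁻¹ * x.2.1, x.2.2) else x
  left_inv := by
    intro x
    by_cases h : x.2.2 ≠ ∅ ∧ x.1 = a
    · obtain ⟨h1, h2⟩ := h
      subst h2
      simp [h1]
    · simp [h]
  right_inv := by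
    intro x
    by_cases h : x.2.2 ≠ ∅ ∧ x.1 = a
    · obtain ⟨h1, h2⟩ := h
      subst h2
      simp [h1]
    · simp [h]

/-!
Write `condMulHom a 𝒮 g` for the map multiplying the `G`-component by `g` at the points
`(a, g', X)` with `X ∈ 𝒮`; then `p_{g,c}` is the case `a = c`, `𝒮 = {X | c ∈ X}`, and `r_{g,a}`
the case `𝒮 = {X | X.Nonempty}`. Conjugation by `q_π` moves the base point `a`, so by
transitivity every `{X | c ∈ X}` is realised at every base point. The commutator of the maps for
`𝒮` and `𝒯` is the map for `𝒮 ∩ 𝒯`, so, `G` being perfect, the families realised at `a` are closed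
under `∩`; the identity `condMulHom_union_mul_inter` then closes them under `∪`. Finally
`{X | X.Nonempty}` is the finite union of the families `{X | c ∈ X}`.
-/

section CondMul

variable {G A : Type*} [Group G]

open Classical in
noncomputable def condMulHom (a : A) (𝒮 : Set (Set A)) : G →* Equiv.Perm (A × G × Set A) where
  toFun g :=
    { toFun := fun x => (x.1, (if x.1 = a ∧ x.2.2 ∈ 𝒮 then g else 1) * x.2.1, x.2.2)
      invFun := fun x => (x.1, (if x.1 = a ∧ x.2.2 ∈ 𝒮 then g else 1)⁻¹ * x.2.1, x.2.2)
      left_inv := fun x => by simp only [inv_mul_cancel_left]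
      right_inv := fun x => by simp only [mul_inv_cancel_left] }
  map_one' := by ext x <;> simp
  map_mul' g h := by
    ext x
    · rfl
    · by_cases hx : x.1 = a ∧ x.2.2 ∈ 𝒮 <;> simp [hx, mul_assoc]
    · rfl

open Classical in
lemma condMulHom_apply (a : A) (𝒮 : Set (Set A)) (g : G) (x : A × G × Set A) :
    condMulHom a 𝒮 g x = (x.1, (if x.1 = a ∧ x.2.2 ∈ 𝒮 then g else 1) * x.2.1, x.2.2) :=
  rfl

lemma pMap_eq_condMulHom (g : G) (c : A) : pMap g c = condMulHom c {X | c ∈ X} g := by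
  ext x <;> by_cases hx : x.1 = c ∧ c ∈ x.2.2 <;> simp [pMap, condMulHom_apply, hx]

lemma rMap_eq_condMulHom (g : G) (a : A) : rMap g a = condMulHom a {X | X.Nonempty} g := by
  ext x <;> by_cases hX : x.2.2 = ∅ <;> by_cases ha : x.1 = a <;>
    simp [rMap, condMulHom_apply, hX, ha, Set.nonempty_iff_ne_empty]

lemma qMap_mul_condMulHom_mul_inv {H : Type*} [Group H] [MulAction H A] (π : H) (a : A)
    (𝒮 : Set (Set A)) (g : G) :
    qMap π * condMulHom a 𝒮 g * (qMap π)⁻¹ = condMulHom (π • a) 𝒮 g := by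
  ext x <;> simp only [qMap, condMulHom_apply, Equiv.Perm.inv_def, Equiv.Perm.mul_apply,
    Equiv.coe_fn_mk, Equiv.coe_fn_symm_mk, smul_inv_smul]
  rw [inv_smul_eq_iff]

open scoped commutatorElement in
lemma commutatorElement_condMulHom (a : A) (𝒮 𝒯 : Set (Set A)) (g h : G) :
    ⁅condMulHom a 𝒮 g, condMulHom a 𝒯 h⁆ = condMulHom a (𝒮 ∩ 𝒯) ⁅g, h⁆ := by
  rw [commutatorElement_def, ← map_inv, ← map_inv]
  ext x
  · rfl
  · simp only [Equiv.Perm.mul_apply, condMulHom_apply]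
    by_cases ha : x.1 = a <;> by_cases hS : x.2.2 ∈ 𝒮 <;> by_cases hT : x.2.2 ∈ 𝒯 <;>
      simp [commutatorElement_def, ha, hS, hT, mul_assoc]
  · rfl

lemma condMulHom_union_mul_inter (a : A) (𝒮 𝒯 : Set (Set A)) (g : G) :
    condMulHom a (𝒮 ∪ 𝒯) g * condMulHom a (𝒮 ∩ 𝒯) g = condMulHom a 𝒮 g * condMulHom a 𝒯 g := by
  ext x
  · rfl
  · by_cases ha : x.1 = a <;> by_cases hS : x.2.2 ∈ 𝒮 <;> by_cases hT : x.2.2 ∈ 𝒯 <;>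
      simp [Equiv.Perm.mul_apply, condMulHom_apply, ha, hS, hT]
  · rfl

end CondMul

section RealizedAt

variable {G A : Type*} [Group G] (K : Subgroup (Equiv.Perm (A × G × Set A))) (a : A)

def realizedAt : Set (Set (Set A)) := {𝒮 | ∀ g : G, condMulHom a 𝒮 g ∈ K}

lemma infClosed_realizedAt (hG : commutator G = ⊤) : InfClosed (realizedAt K a) := by
  intro 𝒮 h𝒮 𝒯 h𝒯 g
  have hcomm : commutator G ≤ K.comap (condMulHom a (𝒮 ∩ 𝒯)) := by
    rw [commutator_eq_closure, Subgroup.closure_le]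
    rintro _ ⟨x, y, rfl⟩
    rw [SetLike.mem_coe, Subgroup.mem_comap, ← commutatorElement_condMulHom,
      commutatorElement_def]
    exact K.mul_mem (K.mul_mem (K.mul_mem (h𝒮 x) (h𝒯 y)) (K.inv_mem (h𝒮 x))) (K.inv_mem (h𝒯 y))
  exact hcomm (hG ▸ Subgroup.mem_top g)

lemma supClosed_realizedAt (hinf : InfClosed (realizedAt K a)) : SupClosed (realizedAt K a) := by
  intro 𝒮 h𝒮 𝒯 h𝒯 g
  change condMulHom a (𝒮 ∪ 𝒯) g ∈ K
  rw [eq_mul_inv_of_mul_eq (condMulHom_union_mul_inter a 𝒮 𝒯 g)]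
  exact K.mul_mem (K.mul_mem (h𝒮 g) (h𝒯 g)) (K.inv_mem (hinf h𝒮 h𝒯 g))

end RealizedAt

lemma Finset.sup'_univ_setOf_mem {A : Type*} [Fintype A] [Nonempty A] :
    Finset.univ.sup' Finset.univ_nonempty (fun c : A => {X : Set A | c ∈ X}) =
      {X | X.Nonempty} := by
  ext X
  simp [Finset.sup'_eq_sup, Finset.sup_eq_iSup, Set.Nonempty]

theorem stmt3_general {G A H : Type*} [Group G] [Group H] [MulAction H A] [Fintype A]
    (hG : commutator G = ⊤)
    (htrans : ∀ a b : A, ∃ π : H, π • a = b)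
    (g : G) (a : A) :
    rMap g a ∈ Subgroup.closure
      (Set.range (fun p : G × A => pMap p.1 p.2) ∪
       Set.range (fun π : H => qMap (G := G) (A := A) π)) := by
  set K := Subgroup.closure (Set.range (fun p : G × A => pMap p.1 p.2) ∪
    Set.range (fun π : H => qMap (G := G) (A := A) π))
  have hmem_point (c : A) : {X : Set A | c ∈ X} ∈ realizedAt K a := fun h => by
    obtain ⟨π, hπ⟩ := htrans c a
    have hq : qMap π ∈ K := Subgroup.subset_closure (Or.inr ⟨π, rfl⟩)
    have hp : pMap h c ∈ K := Subgroup.subset_closure (Or.inl ⟨(h, c), rfl⟩)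
    rw [← hπ, ← qMap_mul_condMulHom_mul_inv, ← pMap_eq_condMulHom]
    exact K.mul_mem (K.mul_mem hq hp) (K.inv_mem hq)
  have : Nonempty A := ⟨a⟩
  have hmem_nonempty : {X : Set A | X.Nonempty} ∈ realizedAt K a := by
    rw [← Finset.sup'_univ_setOf_mem]
    exact (supClosed_realizedAt K a (infClosed_realizedAt K a hG)).finsetSup'_mem _
      fun c _ => hmem_point c
  rw [rMap_eq_condMulHom]
  exact hmem_nonempty g

/-- Let `G` be a perfect group, `A` a finite set with `|A| ≥ 3`, and `H`
a group acting transitively on `A`. Then for every `g ∈ G` and `a ∈ A`, the permutation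
`r_{g,a}` of `A × G × 𝒫(A)` lies in the subgroup generated by all the `p_{g',a'}` and
all the `q_π`. -/
theorem stmt3 {G A H : Type*} [Group G] [Group H] [MulAction H A] [Fintype A]
    (hG : commutator G = ⊤) (hA : 3 ≤ Fintype.card A)
    (htrans : ∀ a b : A, ∃ π : H, π • a = b)
    (g : G) (a : A) :
    rMap g a ∈ Subgroup.closure
      (Set.range (fun p : G × A => pMap p.1 p.2) ∪
       Set.range (fun π : H => qMap (G := G) (A := A) π)) :=
  stmt3_general hG htrans g a
end

section
/- Let A be a set and let x, y : ℤ → A satisfy x(i + p) = x(i) for all i ∈ ℤ and y(i + q) = y(i) for all i ∈ ℤ, where p, q ≥ 1. If x(0) ≠ y(0), then there exists an integer i with 1 ≤ i ≤ p + q − 1 such that x(i) ≠ y(i). In particular, if two such periodic configurations differ at some position, then they differ at two distinct positions within distance p + q − 1 of each other. -/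
/-!
Suppose `x` and `y` agree on `[1, p + q - 1]`. For `i ≢ 0 (mod q)` the representative `r = i % q`
and `r + p` both lie in that window, so `y (i + p) = y (r + p) = x (r + p) = x r = y r = y i`.
Hence `y` is constant along `p, 2p, 3p, …` until the orbit first hits a multiple of `q`, which
happens by `|q| p`; so `y p = y 0`, and `x 0 = x p = y p = y 0`.
-/

namespace Function.Periodic

variable {A : Type*} {x y : ℤ → A} {p q : ℤ}

theorem apply_emod (hy : Periodic y q) (i : ℤ) : y (i % q) = y i := by
  simpa [← Int.emod_def, mul_comm] using hy.sub_int_mul_eq (x := i) (i / q)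

theorem apply_eq_apply_zero_of_dvd (hy : Periodic y q) {i : ℤ} (hi : q ∣ i) : y i = y 0 := by
  obtain ⟨n, rfl⟩ := hi
  simpa [mul_comm] using hy.int_mul_eq n

theorem apply_add_eq_of_eqOn_Icc (hx : Periodic x p) (hy : Periodic y q) (hp : 0 ≤ p)
    (hq : 0 < q) (hxy : Set.EqOn x y (Set.Icc 1 (p + q - 1))) {i : ℤ} (hi : ¬ q ∣ i) :
    y (i + p) = y i := by
  have hr_pos : 1 ≤ i % q := by
    have := Int.emod_nonneg i hq.ne'
    have := mt Int.dvd_of_emod_eq_zero hi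
    omega
  have hr_lt : i % q < q := Int.emod_lt_of_pos i hq
  calc y (i + p) = y (i % q + p) := by
        rw [← hy.apply_emod (i % q + p), Int.emod_add_emod, hy.apply_emod]
    _ = x (i % q + p) := (hxy ⟨by omega, by omega⟩).symm
    _ = x (i % q) := hx _
    _ = y (i % q) := hxy ⟨hr_pos, by omega⟩
    _ = y i := hy.apply_emod i

theorem apply_eq_apply_zero_of_apply_add_eq_of_not_dvd (hy : Periodic y q) (hq : q ≠ 0)
    (hstep : ∀ i, ¬ q ∣ i → y (i + p) = y i) : y p = y 0 := by
  by_contra hne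
  have orbit : ∀ n : ℤ, 1 ≤ n → y (n * p) = y p ∧ ¬ q ∣ n * p := by
    intro n hn
    induction n, hn using Int.leInduction with
    | base => simpa using fun hd => hne (hy.apply_eq_apply_zero_of_dvd hd)
    | succ n _ ih =>
      have hy_succ : y ((n + 1) * p) = y p := by
        rw [add_one_mul, hstep _ ih.2, ih.1]
      exact ⟨hy_succ, fun hd => hne (hy_succ ▸ hy.apply_eq_apply_zero_of_dvd hd)⟩
  exact (orbit |q| (Int.one_le_abs hq)).2 ((self_dvd_abs q).mul_right p)

end Function.Periodic

/-- If `x` has period `p ≥ 1`, `y` has period `q ≥ 1`, and `x` and `y`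
differ at position `0`, then they differ at some position `i` with `1 ≤ i ≤ p + q − 1`. -/
theorem stmt4 {A : Type*} (x y : ℤ → A) (p q : ℤ)
    (hp : 1 ≤ p) (hq : 1 ≤ q)
    (hx : ∀ i : ℤ, x (i + p) = x i) (hy : ∀ i : ℤ, y (i + q) = y i)
    (h0 : x 0 ≠ y 0) :
    ∃ i : ℤ, 1 ≤ i ∧ i ≤ p + q - 1 ∧ x i ≠ y i := by
  by_contra! hagree
  have hxy : Set.EqOn x y (Set.Icc 1 (p + q - 1)) := fun i hi => hagree i hi.1 hi.2
  have hxp : x p = x 0 := by simpa using hx 0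
  have hyp : y p = y 0 :=
    Function.Periodic.apply_eq_apply_zero_of_apply_add_eq_of_not_dvd hy (by omega)
      fun _ => Function.Periodic.apply_add_eq_of_eqOn_Icc hx hy (by omega) (by omega) hxy
  exact h0 (by rw [← hxp, hxy ⟨hp, by omega⟩, hyp])
end

section
/- Let A be a finite alphabet and let X ⊆ (ℤ → A) be a subshift, i.e. a closed set (in the product topology, A discrete) with σ(X) = X, where σ(x)(i) = x(i+1). Then for all positive integers m and n there exists a continuous map f : X → (ℤ → Bool) with f(σ(x)) = σ(f(x)) for all x ∈ X, such that: (i) for all x ∈ X and all integers i < j, if f(x)(i) = true and f(x)(j) = true then j − i ≥ n; and (ii) for every x ∈ X such that the restriction of x to the interval [−m, m] has no period p with 0 < p < n (i.e. there is no p with 0 < p < n such that x(i + p) = x(i) whenever −m ≤ i and i + p ≤ m), there exists j with −2n + 1 ≤ j ≤ 0 and f(x)(j) = true. -/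
/-!
Markers are built greedily. Colour each configuration without a small period on `[-m, m]` by
its word on that window; finitely many colours occur, and two such configurations of the same
colour cannot be shifts of each other by `0 < |p| < n`, since otherwise the window would have
period `|p|`. Going through the colours in order, keep a configuration of colour `r` as a marker
unless one of its shifts by `0 < |i| < n` was already kept with a smaller colour. Kept
configurations are `n`-separated along orbits, every aperiodic configuration lies within
distance `n - 1` of a kept one, and each step only involves finitely many coordinates, so the
marker set is clopen.
-/

def shiftMap {A : Type*} (x : ℤ → A) : ℤ → A := fun i => x (i + 1)

open Set

section Markers

variable {A : Type*}

def shiftBy (k : ℤ) (x : ℤ → A) : ℤ → A := fun i => x (i + k)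

lemma shiftBy_shiftBy (k l : ℤ) (x : ℤ → A) : shiftBy k (shiftBy l x) = shiftBy (k + l) x := by
  funext i; simp [shiftBy, add_assoc]

@[simp] lemma shiftBy_zero (x : ℤ → A) : shiftBy 0 x = x := by funext i; simp [shiftBy]

lemma shiftBy_shiftMap (k : ℤ) (x : ℤ → A) : shiftBy k (shiftMap x) = shiftBy (k + 1) x := by
  funext i; simp [shiftBy, shiftMap, add_assoc]

lemma continuous_shiftBy [TopologicalSpace A] (k : ℤ) :
    Continuous (shiftBy k : (ℤ → A) → ℤ → A) :=
  continuous_pi fun i => continuous_apply (i + k)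

def ShiftSeparated (n : ℕ) (S : Set (ℤ → A)) : Prop :=
  ∀ ⦃x : ℤ → A⦄ ⦃p : ℤ⦄, p ≠ 0 → -(n : ℤ) < p → p < n → x ∈ S → shiftBy p x ∉ S

section Greedy

variable (n : ℕ) (C : ℕ → Set (ℤ → A))

def greedyMarkers : ℕ → Set (ℤ → A)
  | r => {x | x ∈ C r ∧
      ∀ i : ℤ, i ≠ 0 → -(n : ℤ) < i → i < n → ∀ r' < r, shiftBy i x ∉ greedyMarkers r'}

variable {n C}

lemma mem_greedyMarkers {x : ℤ → A} {r : ℕ} :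
    x ∈ greedyMarkers n C r ↔ x ∈ C r ∧
      ∀ i : ℤ, i ≠ 0 → -(n : ℤ) < i → i < n → ∀ r' < r, shiftBy i x ∉ greedyMarkers n C r' := by
  rw [greedyMarkers]; rfl

lemma greedyMarkers_subset (r : ℕ) : greedyMarkers n C r ⊆ C r :=
  fun _ hx => (mem_greedyMarkers.mp hx).1

lemma shiftSeparated_iUnion_greedyMarkers (hC : ∀ r, ShiftSeparated n (C r)) :
    ShiftSeparated n (⋃ r, greedyMarkers n C r) := by
  intro x p hp0 hp1 hp2 hx hy
  obtain ⟨r, hr⟩ := mem_iUnion.mp hx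
  obtain ⟨s, hs⟩ := mem_iUnion.mp hy
  rcases lt_trichotomy r s with hrs | rfl | hsr
  · refine (mem_greedyMarkers.mp hs).2 (-p) (by omega) (by omega) (by omega) r hrs ?_
    rwa [shiftBy_shiftBy, neg_add_cancel, shiftBy_zero]
  · exact hC r hp0 hp1 hp2 (greedyMarkers_subset r hr) (greedyMarkers_subset r hs)
  · exact (mem_greedyMarkers.mp hr).2 p hp0 hp1 hp2 s hsr hs

lemma exists_shiftBy_mem_iUnion_greedyMarkers (hn : 0 < n) {x : ℤ → A} {r : ℕ} (hx : x ∈ C r) :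
    ∃ i : ℤ, -(n : ℤ) < i ∧ i < n ∧ shiftBy i x ∈ ⋃ r, greedyMarkers n C r := by
  by_cases hxr : x ∈ greedyMarkers n C r
  · exact ⟨0, by omega, by omega, mem_iUnion.mpr ⟨r, by rwa [shiftBy_zero]⟩⟩
  · rw [mem_greedyMarkers] at hxr
    simp only [not_and, not_forall, not_not] at hxr
    obtain ⟨i, -, hi1, hi2, r', -, hr'⟩ := hxr hx
    exact ⟨i, hi1, hi2, mem_iUnion.mpr ⟨r', hr'⟩⟩

variable [TopologicalSpace A]

lemma isClopen_greedyMarkers (hC : ∀ r, IsClopen (C r)) (r : ℕ) :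
    IsClopen (greedyMarkers n C r) := by
  induction r using Nat.strong_induction_on with
  | _ r ih =>
    have hdecomp : greedyMarkers n C r = C r ∩
        ⋂ i ∈ (Finset.Ioo (-(n : ℤ)) n).erase 0,
          ⋂ r' ∈ Finset.range r, (shiftBy i ⁻¹' greedyMarkers n C r')ᶜ := by
      ext x
      rw [mem_greedyMarkers]
      simp only [mem_inter_iff, mem_iInter, Finset.mem_erase,
        Finset.mem_Ioo, Finset.mem_range, mem_compl_iff, mem_preimage]
      exact and_congr_right fun _ =>
        ⟨fun h i hi r' hr' => h i hi.1 hi.2.1 hi.2.2 r' hr',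
          fun h i hi0 hi1 hi2 r' hr' => h i ⟨hi0, hi1, hi2⟩ r' hr'⟩
    rw [hdecomp]
    refine (hC r).inter <|
      isClopen_biInter_finset fun i _ => isClopen_biInter_finset fun r' hr' => ?_
    exact ((ih r' (Finset.mem_range.mp hr')).preimage (continuous_shiftBy i)).compl

lemma exists_isClopen_shiftSeparated_markers (hn : 0 < n) (hC : ∀ r, IsClopen (C r))
    (hsep : ∀ r, ShiftSeparated n (C r)) {N : ℕ} (hN : ∀ r, N ≤ r → C r = ∅) :
    ∃ M : Set (ℤ → A), IsClopen M ∧ ShiftSeparated n M ∧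
      ∀ r, ∀ x ∈ C r, ∃ i : ℤ, -(n : ℤ) < i ∧ i < n ∧ shiftBy i x ∈ M := by
  have hfinite : (⋃ r, greedyMarkers n C r) = ⋃ r ∈ Finset.range N, greedyMarkers n C r := by
    refine Subset.antisymm (iUnion_subset fun r x hx => ?_)
      (iUnion₂_subset fun r _ => subset_iUnion _ r)
    have hr : r < N := by
      by_contra! hr
      simpa [hN r hr] using greedyMarkers_subset r hx
    exact mem_biUnion (Finset.mem_range.mpr hr) hx
  refine ⟨⋃ r, greedyMarkers n C r, ?_, shiftSeparated_iUnion_greedyMarkers hsep,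
    fun r x hx => exists_shiftBy_mem_iUnion_greedyMarkers hn hx⟩
  rw [hfinite]
  exact isClopen_biUnion_finset fun r _ => isClopen_greedyMarkers hC r

end Greedy

lemma isClopen_of_restrict_eq [TopologicalSpace A] [DiscreteTopology A] (s : Finset ℤ)
    {S : Set (ℤ → A)} (hS : ∀ x y, s.restrict x = s.restrict y → x ∈ S → y ∈ S) : IsClopen S := by
  have hpre : S = s.restrict ⁻¹' (s.restrict '' S) :=
    Subset.antisymm (subset_preimage_image _ _) fun y ⟨x, hx, hxy⟩ => hS x y hxy hx
  rw [hpre]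
  exact (isClopen_discrete _).preimage (Finset.continuous_restrict s)

section Window

variable (m n : ℕ)

def HasPeriodBelow (x : ℤ → A) : Prop :=
  ∃ p : ℕ, 0 < p ∧ p < n ∧ ∀ i : ℤ, -(m : ℤ) ≤ i → i + p ≤ m → x (i + p) = x i

noncomputable abbrev window : Finset ℤ := Finset.Icc (-(m : ℤ)) m

variable [Fintype A] in
noncomputable def windowRank (x : ℤ → A) : ℕ :=
  Fintype.equivFin (window m → A) ((window m).restrict x)

variable [Fintype A] in
def windowClass (r : ℕ) : Set (ℤ → A) := {x | ¬ HasPeriodBelow m n x ∧ windowRank m x = r}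

variable {m n}

lemma apply_eq_of_restrict_window_eq {x y : ℤ → A}
    (h : (window m).restrict x = (window m).restrict y)
    {i : ℤ} (hi1 : -(m : ℤ) ≤ i) (hi2 : i ≤ m) : x i = y i :=
  congrFun h ⟨i, Finset.mem_Icc.mpr ⟨hi1, hi2⟩⟩

lemma HasPeriodBelow.of_restrict_window_eq {x y : ℤ → A}
    (h : (window m).restrict x = (window m).restrict y) (hx : HasPeriodBelow m n x) :
    HasPeriodBelow m n y := by
  obtain ⟨p, hp0, hpn, hper⟩ := hx
  refine ⟨p, hp0, hpn, fun i hi1 hi2 => ?_⟩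
  rw [← apply_eq_of_restrict_window_eq h (by omega) hi2,
    ← apply_eq_of_restrict_window_eq h hi1 (by omega), hper i hi1 hi2]

lemma hasPeriodBelow_of_restrict_window_shiftBy_eq {x : ℤ → A} {p : ℤ}
    (hp0 : p ≠ 0) (hp1 : -(n : ℤ) < p) (hp2 : p < n)
    (h : (window m).restrict x = (window m).restrict (shiftBy p x)) : HasPeriodBelow m n x := by
  refine ⟨p.natAbs, by omega, by omega, fun i hi1 hi2 => ?_⟩
  rcases lt_or_gt_of_ne hp0 with hneg | hpos
  · have hx := apply_eq_of_restrict_window_eq h (i := i + p.natAbs) (by omega) hi2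
    rwa [shiftBy, show i + (p.natAbs : ℤ) + p = i by omega] at hx
  · have hx := apply_eq_of_restrict_window_eq h hi1 (by omega)
    rwa [shiftBy, ← show (p.natAbs : ℤ) = p by omega, eq_comm] at hx

variable [Fintype A]

lemma restrict_window_eq_of_windowRank_eq {x y : ℤ → A} (h : windowRank m x = windowRank m y) :
    (window m).restrict x = (window m).restrict y :=
  (Fintype.equivFin _).injective (Fin.val_injective h)

lemma shiftSeparated_windowClass (r : ℕ) : ShiftSeparated n (windowClass m n (A := A) r) :=
  fun _ _ hp0 hp1 hp2 ⟨hx, hxr⟩ ⟨_, hyr⟩ =>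
    hx (hasPeriodBelow_of_restrict_window_shiftBy_eq hp0 hp1 hp2
      (restrict_window_eq_of_windowRank_eq (hxr.trans hyr.symm)))

lemma windowClass_eq_empty {r : ℕ} (hr : Fintype.card (window m → A) ≤ r) :
    windowClass m n (A := A) r = ∅ :=
  eq_empty_of_forall_notMem fun x ⟨_, hxr⟩ => by
    have := (Fintype.equivFin (window m → A) ((window m).restrict x)).isLt
    rw [windowRank] at hxr
    omega

lemma isClopen_windowClass [TopologicalSpace A] [DiscreteTopology A] (r : ℕ) :
    IsClopen (windowClass m n (A := A) r) :=
  isClopen_of_restrict_eq (window m) fun x y h ⟨hx, hxr⟩ =>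
    ⟨fun hy => hx (hy.of_restrict_window_eq h.symm), by rw [← hxr, windowRank, windowRank, h]⟩

end Window

end Markers

theorem stmt5_general {A : Type*} [Fintype A] [TopologicalSpace A] [DiscreteTopology A]
    (X : Set (ℤ → A))
    (m n : ℕ) (hn : 0 < n) :
    ∃ f : X → (ℤ → Bool),
      Continuous f ∧
      (∀ (x : X) (hx : shiftMap x.val ∈ X), f ⟨shiftMap x.val, hx⟩ = shiftMap (f x)) ∧
      (∀ (x : X) (i j : ℤ), i < j → f x i = true → f x j = true → (n : ℤ) ≤ j - i) ∧
      (∀ x : X,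
        (¬ ∃ p : ℕ, 0 < p ∧ p < n ∧
            ∀ i : ℤ, -(m : ℤ) ≤ i → i + p ≤ (m : ℤ) → x.val (i + p) = x.val i) →
        ∃ j : ℤ, -2 * (n : ℤ) + 1 ≤ j ∧ j ≤ 0 ∧ f x j = true) := by
  obtain ⟨M, hMclopen, hMsep, hMcover⟩ := exists_isClopen_shiftSeparated_markers hn
    (isClopen_windowClass (A := A) (m := m)) shiftSeparated_windowClass
    (fun _ => windowClass_eq_empty)
  -- the offset `n - 1` moves a marker at `i ∈ (-n, n)` to `j = i - n + 1 ∈ [-2n+1, 0]`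
  refine ⟨fun x j => M.boolIndicator (shiftBy (j + n - 1) x.val), ?_, ?_, ?_, ?_⟩
  · exact continuous_pi fun j => ((continuous_boolIndicator_iff_isClopen M).mpr hMclopen).comp
      ((continuous_shiftBy _).comp continuous_subtype_val)
  · intro x _
    funext j
    simp only [shiftMap, shiftBy_shiftMap]
    ring_nf
  · intro x i j hij hi hj
    rw [← mem_iff_boolIndicator] at hi hj
    rw [show j + n - 1 = (j - i) + (i + n - 1) by ring, ← shiftBy_shiftBy] at hj
    by_contra! hji
    exact hMsep (by omega) (by omega) hji hi hj
  · intro x hx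
    obtain ⟨i, hi1, hi2, hiM⟩ := hMcover _ x.val ⟨hx, rfl⟩
    refine ⟨i - n + 1, by omega, by omega, ?_⟩
    rwa [← mem_iff_boolIndicator, show i - n + 1 + n - 1 = i by ring]

/-- marker lemma: Let `X ⊆ ℤ → A` be a subshift (closed and
shift-invariant) over a finite alphabet `A`. For all positive integers `m, n` there is
a continuous shift-commuting map `f : X → (ℤ → Bool)` such that (i) any two `true`s in
`f x` are at distance at least `n`, and (ii) whenever the restriction of `x` to
`[-m, m]` has no period `p` with `0 < p < n`, `f x` has a `true` in `[-2n+1, 0]`. -/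
theorem stmt5 {A : Type*} [Fintype A] [TopologicalSpace A] [DiscreteTopology A]
    (X : Set (ℤ → A)) (hclosed : IsClosed X) (hinv : shiftMap '' X = X)
    (m n : ℕ) (hm : 0 < m) (hn : 0 < n) :
    ∃ f : X → (ℤ → Bool),
      Continuous f ∧
      (∀ (x : X) (hx : shiftMap x.val ∈ X), f ⟨shiftMap x.val, hx⟩ = shiftMap (f x)) ∧
      (∀ (x : X) (i j : ℤ), i < j → f x i = true → f x j = true → (n : ℤ) ≤ j - i) ∧
      (∀ x : X,
        (¬ ∃ p : ℕ, 0 < p ∧ p < n ∧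
            ∀ i : ℤ, -(m : ℤ) ≤ i → i + p ≤ (m : ℤ) → x.val (i + p) = x.val i) →
        ∃ j : ℤ, -2 * (n : ℤ) + 1 ≤ j ∧ j ≤ 0 ∧ f x j = true) :=
  stmt5_general X m n hn
end

section
/- Let A be a finite alphabet with |A| ≥ 2. Then for every k ∈ ℕ there exist n ∈ ℕ and a mutually unbordered set W ⊆ A^n with |W| ≥ k. -/
/-!
Fix two letters `a ≠ b` and take the words `a^(m+1) b y b` with `y ∈ A^m`; there are `|A|^m ≥ m`
of them. Every word begins with `a^(m+1)`, while every window of length `m+1` starting at a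
positive position (cut off at the end of the word) meets one of the two separators `b`. Hence
for a shift `0 < t < n`, some letter in the first `m+1` positions of the overlap is `b` in the
shifted word and `a` in the other one, so no two of these words overlap properly.
-/

section MutuallyUnbordered

variable {A : Type*}

def MutuallyUnbordered {n : ℕ} (W : Set (Fin n → A)) : Prop :=
  ∀ w ∈ W, ∀ w' ∈ W, ∀ t : ℕ, 0 < t → t < n →
    ∃ (i : ℕ) (h : t + i < n),
      w ⟨t + i, h⟩ ≠ w' ⟨i, lt_of_le_of_lt (Nat.le_add_left i t) h⟩

theorem mutuallyUnbordered_of_prefix_of_window {n p : ℕ} {a : A} {W : Set (Fin n → A)}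
    (hprefix : ∀ w ∈ W, ∀ j : Fin n, (j : ℕ) < p → w j = a)
    (hwindow : ∀ w ∈ W, ∀ t : ℕ, 0 < t → t < n →
      ∃ i < p, ∃ h : t + i < n, w ⟨t + i, h⟩ ≠ a) :
    MutuallyUnbordered W := by
  intro w hw w' hw' t ht htn
  obtain ⟨i, hip, h, hne⟩ := hwindow w hw t ht htn
  exact ⟨i, h, by rwa [hprefix w' hw' _ hip]⟩

end MutuallyUnbordered

section MarkedWord

variable {A : Type*} (a b : A) {m : ℕ}

/-- The word `a^(m+1) b y b` of length `2m+3`. -/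
def markedWord (y : Fin m → A) (j : Fin (2 * m + 3)) : A :=
  if (j : ℕ) ≤ m then a
  else if h : m + 1 < (j : ℕ) ∧ (j : ℕ) < 2 * m + 2 then y ⟨j - (m + 2), by omega⟩
  else b

variable {a b}

theorem markedWord_of_le (y : Fin m → A) {j : Fin (2 * m + 3)} (hj : (j : ℕ) ≤ m) :
    markedWord a b y j = a := if_pos hj

theorem markedWord_of_separator (y : Fin m → A) {j : Fin (2 * m + 3)}
    (hj : (j : ℕ) = m + 1 ∨ (j : ℕ) = 2 * m + 2) : markedWord a b y j = b := by
  rw [markedWord, if_neg (by omega), dif_neg (by omega)]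

theorem markedWord_middle (y : Fin m → A) (i : Fin m) :
    markedWord a b y ⟨m + 2 + i, by omega⟩ = y i := by
  rw [markedWord, if_neg (by simp only; omega), dif_pos (by simp only; omega)]
  congr 1
  ext
  simp

variable (a b m)

theorem markedWord_injective : Function.Injective (markedWord (m := m) a b) := by
  intro y y' h
  funext i
  rw [← markedWord_middle (a := a) (b := b) y, ← markedWord_middle (a := a) (b := b) y', h]

theorem mutuallyUnbordered_range_markedWord (hab : a ≠ b) :
    MutuallyUnbordered (Set.range (markedWord (m := m) a b)) := by
  refine mutuallyUnbordered_of_prefix_of_window (p := m + 1) (a := a) ?_ ?_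
  · rintro _ ⟨y, rfl⟩ j hj
    exact markedWord_of_le y (by omega)
  · rintro _ ⟨y, rfl⟩ t ht htn
    rcases le_or_gt t (m + 1) with hle | hgt
    · exact ⟨m + 1 - t, by omega, by omega,
        by rw [markedWord_of_separator y (by simp only; omega)]; exact hab.symm⟩
    · exact ⟨2 * m + 2 - t, by omega, by omega,
        by rw [markedWord_of_separator y (by simp only; omega)]; exact hab.symm⟩

end MarkedWord

/-- Over any alphabet `A` with `|A| ≥ 2`, for every `k` there exist `n`
and a mutually unbordered set `W ⊆ A^n` with `|W| ≥ k`. -/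
theorem stmt10 {A : Type*} [Fintype A] [DecidableEq A]
    (hA : 2 ≤ Fintype.card A) (k : ℕ) :
    ∃ (n : ℕ) (W : Finset (Fin n → A)),
      k ≤ W.card ∧
      ∀ w ∈ W, ∀ w' ∈ W, ∀ t : ℕ, 0 < t → t < n →
        ∃ (i : ℕ) (h : t + i < n),
          w ⟨t + i, h⟩ ≠ w' ⟨i, lt_of_le_of_lt (Nat.le_add_left i t) h⟩ := by
  obtain ⟨a, b, hab⟩ := Fintype.exists_pair_of_one_lt_card (α := A) (by omega)
  refine ⟨2 * k + 3, Finset.univ.image (markedWord a b), ?_, ?_⟩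
  · rw [Finset.card_image_of_injective _ (markedWord_injective a b k), Finset.card_univ,
      Fintype.card_fun, Fintype.card_fin]
    exact (Nat.lt_pow_self hA).le
  · have hW := mutuallyUnbordered_range_markedWord a b k hab
    rwa [← Set.image_univ, ← Finset.coe_univ, ← Finset.coe_image] at hW
end

section
/- Let B be a finite set with |B| ≥ 5, and consider configurations x : ℤ → Bool × B. Define the partial shift s by s(x)(i) = ((x(i+1)).1, (x(i)).2), and for a ∈ Bool and an even permutation π of B define f_{a,π} by f_{a,π}(x)(i) = ((x(i)).1, π((x(i)).2)) if (x(i)).1 = a, and f_{a,π}(x)(i) = x(i) otherwise. Let G be the subgroup of the group of bijections of ℤ → Bool × B generated by s together with all the f_{a,π}. Then for every n ≥ 1, every set U of functions from {0, …, n−1} to Bool, and every even permutation π of B, the bijection f_{U,π} defined by f_{U,π}(x)(i) = ((x(i)).1, π((x(i)).2)) if the function j ↦ (x(i+j)).1 (for 0 ≤ j < n) belongs to U, and f_{U,π}(x)(i) = x(i) otherwise, belongs to G. -/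
/-! Both kinds of generators `f_{a,π}` and the target maps `f_{U,π}` apply `π` on the second
track exactly where some condition on the first track holds; call a condition realizable if
all its even permutations obtained this way lie in `G`. Single letters are realizable, and
conjugating by `s` translates a condition by one cell. The commutator of two such maps
is the map of the conjunction of the conditions and the commutator of the permutations, so
since `Alt(B)` is perfect for `|B| ≥ 5`, realizable conditions are closed under conjunction;
they are also closed under disjoint disjunction. Splitting the window condition of `U` according
to the first letter of the window gives every `f_{U,π}` by induction on the window length. -/

/-- A permutation of `ℤ → Bool × B` is the partial shift `s` if it shifts the first
(`Bool`) track and fixes the second (`B`) track. -/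
def IsPartialShift {B : Type*} (σ : Equiv.Perm (ℤ → Bool × B)) : Prop :=
  ∀ (x : ℤ → Bool × B) (i : ℤ), σ x i = ((x (i + 1)).1, (x i).2)

/-- A permutation of `ℤ → Bool × B` is one of the maps `f_{a,π}` (`a ∈ Bool`, `π` an
even permutation of `B`) if it applies `π` cellwise on the second track exactly at the
cells whose first-track symbol equals `a`. -/
def IsSymbolMap {B : Type*} [Fintype B] [DecidableEq B]
    (σ : Equiv.Perm (ℤ → Bool × B)) : Prop :=
  ∃ (a : Bool) (π : Equiv.Perm B), π ∈ alternatingGroup B ∧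
    ∀ (x : ℤ → Bool × B) (i : ℤ),
      σ x i = if (x i).1 = a then ((x i).1, π ((x i).2)) else x i

namespace TwoTrack

open Equiv
open scoped commutatorElement

variable {B : Type*} (c d : (ℤ → Bool) → ℤ → Prop)

open Classical in
noncomputable def controlledMap (π : Perm B) (x : ℤ → Bool × B) : ℤ → Bool × B :=
  fun i => ((x i).1, if c (Prod.fst ∘ x) i then π (x i).2 else (x i).2)

lemma controlledMap_apply (π : Perm B) (x : ℤ → Bool × B) (i : ℤ)
    [Decidable (c (Prod.fst ∘ x) i)] :
    controlledMap c π x i = if c (Prod.fst ∘ x) i then ((x i).1, π (x i).2) else x i := by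
  by_cases h : c (Prod.fst ∘ x) i <;> simp [controlledMap, h]

lemma controlledMap_mul (π ρ : Perm B) (x : ℤ → Bool × B) :
    controlledMap c (π * ρ) x = controlledMap c π (controlledMap c ρ x) := by
  classical
  funext i
  have hfst : Prod.fst ∘ controlledMap c ρ x = Prod.fst ∘ x := rfl
  by_cases h : c (Prod.fst ∘ x) i <;> simp [controlledMap_apply, hfst, h]

lemma controlledMap_one (x : ℤ → Bool × B) : controlledMap c 1 x = x := by
  classical
  funext i
  simp [controlledMap_apply]

noncomputable def controlledPerm : Perm B →* Perm (ℤ → Bool × B) where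
  toFun π :=
    { toFun := controlledMap c π
      invFun := controlledMap c π⁻¹
      left_inv x := by rw [← controlledMap_mul, inv_mul_cancel, controlledMap_one]
      right_inv x := by rw [← controlledMap_mul, mul_inv_cancel, controlledMap_one] }
  map_one' := Equiv.ext (controlledMap_one c)
  map_mul' π ρ := Equiv.ext (controlledMap_mul c π ρ)

lemma controlledPerm_apply (π : Perm B) (x : ℤ → Bool × B) (i : ℤ)
    [Decidable (c (Prod.fst ∘ x) i)] :
    controlledPerm c π x i = if c (Prod.fst ∘ x) i then ((x i).1, π (x i).2) else x i :=
  controlledMap_apply c π x i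

@[simp]
lemma controlledPerm_apply_fst (π : Perm B) (x : ℤ → Bool × B) (i : ℤ) :
    (controlledPerm c π x i).1 = (x i).1 :=
  rfl

@[simp]
lemma fst_comp_controlledPerm (π : Perm B) (x : ℤ → Bool × B) :
    Prod.fst ∘ controlledPerm c π x = Prod.fst ∘ x :=
  rfl

lemma controlledPerm_commutator (α β : Perm B) :
    ⁅controlledPerm c α, controlledPerm d β⁆ =
      controlledPerm (fun y i => c y i ∧ d y i) ⁅α, β⁆ := by
  classical
  refine Equiv.ext fun x => funext fun i => ?_
  rw [commutatorElement_def, commutatorElement_def, ← map_inv, ← map_inv]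
  simp only [Perm.mul_apply, controlledPerm_apply, fst_comp_controlledPerm]
  by_cases hc : c (Prod.fst ∘ x) i <;> by_cases hd : d (Prod.fst ∘ x) i <;> simp [hc, hd]

lemma controlledPerm_or (hcd : ∀ y i, c y i → ¬ d y i) (π : Perm B) :
    controlledPerm (fun y i => c y i ∨ d y i) π = controlledPerm c π * controlledPerm d π := by
  classical
  refine Equiv.ext fun x => funext fun i => ?_
  simp only [Perm.mul_apply, controlledPerm_apply, fst_comp_controlledPerm]
  by_cases hc : c (Prod.fst ∘ x) i
  · simp [hc, hcd _ _ hc]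
  · simp [hc]

lemma controlledPerm_false : controlledPerm (B := B) (fun _ _ => False) = 1 := by
  classical
  ext π x i <;> simp [controlledPerm_apply]

def partialShift : Perm (ℤ → Bool × B) where
  toFun x i := ((x (i + 1)).1, (x i).2)
  invFun x i := ((x (i - 1)).1, (x i).2)
  left_inv x := by funext i; simp
  right_inv x := by funext i; simp

lemma isPartialShift_partialShift : IsPartialShift (partialShift : Perm (ℤ → Bool × B)) :=
  fun _ _ => rfl

lemma partialShift_apply (x : ℤ → Bool × B) (i : ℤ) :
    partialShift x i = ((x (i + 1)).1, (x i).2) :=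
  rfl

lemma partialShift_inv_apply (x : ℤ → Bool × B) (i : ℤ) :
    (partialShift⁻¹ : Perm (ℤ → Bool × B)) x i = ((x (i - 1)).1, (x i).2) :=
  rfl

lemma partialShift_conj_controlledPerm (π : Perm B) :
    partialShift⁻¹ * controlledPerm c π * partialShift =
      controlledPerm (fun y i => c (fun j => y (j + 1)) i) π := by
  classical
  refine Equiv.ext fun x => funext fun i => ?_
  have hfst : Prod.fst ∘ partialShift x = fun j => (x (j + 1)).1 := rfl
  simp only [Perm.mul_apply, partialShift_inv_apply, controlledPerm_apply_fst,
    partialShift_apply, sub_add_cancel]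
  rw [controlledPerm_apply, hfst]
  by_cases h : c (fun j => (x (j + 1)).1) i <;>
    simp [controlledPerm_apply, h, partialShift_apply]

def window (n : ℕ) (y : ℤ → Bool) (i : ℤ) : Fin n → Bool :=
  fun j => y (i + ((j : ℕ) : ℤ))

lemma window_succ (n : ℕ) (y : ℤ → Bool) (i : ℤ) :
    window (n + 1) y i = Fin.cons (y i) (window n (fun j => y (j + 1)) i) := by
  funext j
  cases j using Fin.cases <;> simp [window, add_assoc]

variable (B) in
def shiftSymbolGroup [Fintype B] [DecidableEq B] : Subgroup (Perm (ℤ → Bool × B)) :=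
  Subgroup.closure {τ | IsPartialShift τ ∨ IsSymbolMap τ}

variable (B) in
def IsRealizable [Fintype B] [DecidableEq B] (c : (ℤ → Bool) → ℤ → Prop) : Prop :=
  ∀ π ∈ alternatingGroup B, controlledPerm c π ∈ shiftSymbolGroup B

section Realizable

variable [Fintype B] [DecidableEq B] {c d}

lemma IsRealizable.congr (hc : IsRealizable B c) (hcd : ∀ y i, c y i ↔ d y i) :
    IsRealizable B d := by
  obtain rfl : c = d := funext₂ fun y i => propext (hcd y i)
  exact hc

lemma isRealizable_letter (a : Bool) : IsRealizable B fun y i => y i = a :=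
  fun π hπ =>
    Subgroup.subset_closure (Or.inr ⟨a, π, hπ, fun x i => controlledPerm_apply _ π x i⟩)

lemma IsRealizable.shift (hc : IsRealizable B c) :
    IsRealizable B fun y i => c (fun j => y (j + 1)) i := by
  have hs : partialShift ∈ shiftSymbolGroup B :=
    Subgroup.subset_closure (Or.inl isPartialShift_partialShift)
  intro π hπ
  rw [← partialShift_conj_controlledPerm]
  exact mul_mem (mul_mem (inv_mem hs) (hc π hπ)) hs

lemma IsRealizable.and (hB : 5 ≤ Fintype.card B) (hc : IsRealizable B c)
    (hd : IsRealizable B d) : IsRealizable B fun y i => c y i ∧ d y i := by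
  suffices ⁅alternatingGroup B, alternatingGroup B⁆ ≤
      (shiftSymbolGroup B).comap (controlledPerm fun y i => c y i ∧ d y i) by
    intro π hπ
    rw [← commutator_alternatingGroup_eq_self (by rwa [Nat.card_eq_fintype_card])] at hπ
    exact this hπ
  rw [Subgroup.commutator_le]
  intro α hα β hβ
  rw [Subgroup.mem_comap, ← controlledPerm_commutator, commutatorElement_def]
  have hα' := hc α hα
  have hβ' := hd β hβ
  exact mul_mem (mul_mem (mul_mem hα' hβ') (inv_mem hα')) (inv_mem hβ')

lemma IsRealizable.or (hc : IsRealizable B c) (hd : IsRealizable B d)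
    (hcd : ∀ y i, c y i → ¬ d y i) : IsRealizable B fun y i => c y i ∨ d y i :=
  fun π hπ => controlledPerm_or c d hcd π ▸ mul_mem (hc π hπ) (hd π hπ)

lemma isRealizable_const (p : Prop) : IsRealizable B fun _ _ => p := by
  by_cases hp : p
  · refine ((isRealizable_letter true).or (isRealizable_letter false) ?_).congr ?_
    · simp
    · simp [hp]
  · simp only [hp]
    intro π _
    rw [controlledPerm_false]
    exact one_mem _

lemma isRealizable_window (hB : 5 ≤ Fintype.card B) :
    ∀ (n : ℕ) (U : Set (Fin n → Bool)), IsRealizable B fun y i => window n y i ∈ U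
  | 0, U => (isRealizable_const (Fin.elim0 ∈ U)).congr fun y i => by
      rw [Subsingleton.elim (window 0 y i) Fin.elim0]
  | n + 1, U => by
    have hfirst (a : Bool) : IsRealizable B fun y i =>
        y i = a ∧ window n (fun j => y (j + 1)) i ∈ {v | Fin.cons a v ∈ U} :=
      (isRealizable_letter a).and hB (isRealizable_window hB n _).shift
    refine ((hfirst true).or (hfirst false) ?_).congr fun y i => ?_
    · simp_all
    · rw [window_succ]
      cases y i <;> simp

end Realizable

end TwoTrack

theorem stmt11_general {B : Type*} [Fintype B] [DecidableEq B]
    (hB : 5 ≤ Fintype.card B)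
    (n : ℕ) (U : Set (Fin n → Bool)) (π : Equiv.Perm B)
    (hπ : π ∈ alternatingGroup B)
    (σ : Equiv.Perm (ℤ → Bool × B))
    (hσ : ∀ (x : ℤ → Bool × B) (i : ℤ),
      ((fun j : Fin n => (x (i + ((j : ℕ) : ℤ))).1) ∈ U →
        σ x i = ((x i).1, π ((x i).2))) ∧
      ((fun j : Fin n => (x (i + ((j : ℕ) : ℤ))).1) ∉ U → σ x i = x i)) :
    σ ∈ Subgroup.closure
      {τ : Equiv.Perm (ℤ → Bool × B) | IsPartialShift τ ∨ IsSymbolMap τ} := by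
  classical
  have hσ_eq : σ = TwoTrack.controlledPerm (fun y i => TwoTrack.window n y i ∈ U) π := by
    refine Equiv.ext fun x => funext fun i => ?_
    rw [TwoTrack.controlledPerm_apply]
    by_cases hx : TwoTrack.window n (Prod.fst ∘ x) i ∈ U
    · rw [if_pos hx, (hσ x i).1 hx]
    · rw [if_neg hx, (hσ x i).2 hx]
  rw [hσ_eq]
  exact TwoTrack.isRealizable_window hB n U π hπ

/-- Let `B` be finite with `|B| ≥ 5` and let `G` be the group of
bijections of `ℤ → Bool × B` generated by the partial shift `s` and the maps `f_{a,π}`.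
Then for every `n ≥ 1`, every set `U` of length-`n` binary words, and every even
permutation `π` of `B`, the bijection `f_{U,π}`, which applies `π` at cell `i` of the
second track exactly when the first-track word read at positions `i, …, i+n−1` belongs
to `U`, belongs to `G`. -/
theorem stmt11 {B : Type*} [Fintype B] [DecidableEq B]
    (hB : 5 ≤ Fintype.card B)
    (n : ℕ) (hn : 1 ≤ n) (U : Set (Fin n → Bool)) (π : Equiv.Perm B)
    (hπ : π ∈ alternatingGroup B)
    (σ : Equiv.Perm (ℤ → Bool × B))
    (hσ : ∀ (x : ℤ → Bool × B) (i : ℤ),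
      ((fun j : Fin n => (x (i + ((j : ℕ) : ℤ))).1) ∈ U →
        σ x i = ((x i).1, π ((x i).2))) ∧
      ((fun j : Fin n => (x (i + ((j : ℕ) : ℤ))).1) ∉ U → σ x i = x i)) :
    σ ∈ Subgroup.closure
      {τ : Equiv.Perm (ℤ → Bool × B) | IsPartialShift τ ∨ IsSymbolMap τ} :=
  stmt11_general hB n U π hπ σ hσ
end

section
/- Let B be a finite set with |B| ≥ 5, and consider configurations x : ℤ → Bool × B. Define the partial shift s by s(x)(i) = ((x(i+1)).1, (x(i)).2), and for a ∈ Bool and an even permutation π of B define f_{a,π} by f_{a,π}(x)(i) = ((x(i)).1, π((x(i)).2)) if (x(i)).1 = a, and f_{a,π}(x)(i) = x(i) otherwise. Let G be the subgroup of the group of bijections of ℤ → Bool × B generated by s together with all the f_{a,π}. Then there exists a group homomorphism φ : G → ℤ such that φ(s) = 1 and φ(f_{a,π}) = 0 for all a ∈ Bool and all even permutations π of B, and every finitely generated subgroup of the kernel of φ is finite (i.e. G is (locally finite)-by-ℤ). -/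
/-- The group `G` generated by the partial shift and the maps `f_{a,π}`. -/
def genGroup (B : Type*) [Fintype B] [DecidableEq B] :
    Subgroup (Equiv.Perm (ℤ → Bool × B)) :=
  Subgroup.closure {τ : Equiv.Perm (ℤ → Bool × B) | IsPartialShift τ ∨ IsSymbolMap τ}

/-!
Every element `g` of `G` is a *local rule*: there are `n ∈ ℤ` and a finite window `S ⊆ ℤ` such
that `g` shifts the first track by `n` and, at each cell `i`, applies to the second track a
permutation of `B` that depends only on the first track on `i + S`. Local rules are closed under
composition and inversion, so this holds on all of `G`, and the shift `n` of `g` is determined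
by `g` (test it on a configuration with a single `true`); hence `g ↦ n` is a homomorphism
`φ : G → ℤ`. An element of `ker φ` with window `R` is determined by a map
`(R → Bool) → B → B`, so the rules of shift `0` and window `R` form a finite group. Finitely many
elements of `ker φ` share a common window, hence generate a subgroup of such a finite group.
-/

namespace CellularGroup

variable {B : Type*}

def IsLocalRule (n : ℤ) (S : Finset ℤ) (g : Equiv.Perm (ℤ → Bool × B)) : Prop :=
  ∃ F : (ℤ → Bool) → Equiv.Perm B,
    (∀ u v : ℤ → Bool, (∀ j ∈ S, u j = v j) → F u = F v) ∧
    ∀ (x : ℤ → Bool × B) (i : ℤ),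
      g x i = ((x (i + n)).1, F (fun j => (x (i + j)).1) (x i).2)

namespace IsLocalRule

variable {n m : ℤ} {S T : Finset ℤ} {g h : Equiv.Perm (ℤ → Bool × B)}

theorem mono (hST : S ⊆ T) (hg : IsLocalRule n S g) : IsLocalRule n T g := by
  obtain ⟨F, hF, hgF⟩ := hg
  exact ⟨F, fun u v huv => hF u v fun j hj => huv j (hST hj), hgF⟩

theorem one : IsLocalRule (B := B) 0 ∅ 1 :=
  ⟨fun _ => 1, fun _ _ _ => rfl, fun x i => by simp⟩

theorem mul (hg : IsLocalRule n S g) (hh : IsLocalRule m T h) :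
    IsLocalRule (n + m) (S.image (· + m) ∪ T) (g * h) := by
  obtain ⟨F, hF, hgF⟩ := hg
  obtain ⟨G, hG, hhG⟩ := hh
  refine ⟨fun u => F (fun j => u (j + m)) * G u, fun u v huv => ?_, fun x i => ?_⟩
  · dsimp only
    have hFuv : F (fun j => u (j + m)) = F (fun j => v (j + m)) :=
      hF _ _ fun j hj => huv (j + m) (Finset.mem_union_left _ (Finset.mem_image_of_mem _ hj))
    rw [hFuv, hG u v fun j hj => huv j (Finset.mem_union_right _ hj)]
  · have hfst : ∀ k, (h x k).1 = (x (k + m)).1 := fun k => by rw [hhG]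
    simp only [Equiv.Perm.mul_apply, hgF (h x) i, hfst, add_assoc, hhG x i]

theorem inv (hg : IsLocalRule n S g) : IsLocalRule (-n) (S.image (· - n)) g⁻¹ := by
  obtain ⟨F, hF, hgF⟩ := hg
  refine ⟨fun u => (F fun j => u (j - n))⁻¹, fun u v huv => ?_, fun y i => ?_⟩
  · dsimp only
    rw [hF _ _ fun j hj => huv (j - n) (Finset.mem_image_of_mem _ hj)]
  · set x := g⁻¹ y
    have hy : ∀ k, y k = ((x (k + n)).1, F (fun j => (x (k + j)).1) (x k).2) := fun k => by
      rw [← hgF x k]; simp [x]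
    have hfst : ∀ k, (x k).1 = (y (k - n)).1 := fun k => by rw [hy]; simp
    refine Prod.ext ?_ ?_
    · simp [hfst, sub_eq_add_neg]
    · simp only [hy i, hfst, add_sub_assoc, Equiv.Perm.coe_inv, Equiv.symm_apply_apply]

theorem shift_unique [Nonempty B] (hn : IsLocalRule n S g) (hm : IsLocalRule m T g) :
    n = m := by
  obtain ⟨F, -, hgF⟩ := hn
  obtain ⟨G, -, hgG⟩ := hm
  obtain ⟨b⟩ := ‹Nonempty B›
  have h := congrArg Prod.fst ((hgF (fun j => (decide (j = n), b)) 0).symm.trans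
    (hgG (fun j => (decide (j = n), b)) 0))
  simp at h
  omega

end IsLocalRule

theorem IsPartialShift.isLocalRule {g : Equiv.Perm (ℤ → Bool × B)} (hg : IsPartialShift g) :
    IsLocalRule 1 ∅ g :=
  ⟨fun _ => 1, fun _ _ _ => rfl, fun x i => by rw [hg x i]; rfl⟩

variable (B) in
def windowSubgroup (R : Finset ℤ) : Subgroup (Equiv.Perm (ℤ → Bool × B)) where
  carrier := {g | IsLocalRule 0 R g}
  one_mem' := IsLocalRule.one.mono (Finset.empty_subset R)
  mul_mem' hg hh := (hg.mul hh).mono (by simp)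
  inv_mem' hg := hg.inv.mono (by simp)

def windowConfig (R : Finset ℤ) (u : R → Bool) (c : B) : ℤ → Bool × B :=
  fun j => (if hj : j ∈ R then u ⟨j, hj⟩ else false, c)

theorem windowSubgroup_finite [Finite B] (R : Finset ℤ) :
    (windowSubgroup B R : Set (Equiv.Perm (ℤ → Bool × B))).Finite := by
  let code (g : Equiv.Perm (ℤ → Bool × B)) (u : R → Bool) (c : B) : B :=
    (g (windowConfig R u c) 0).2
  refine Set.Finite.of_injOn (f := code) (Set.mapsTo_univ _ _) ?_ Set.finite_univ
  rintro g ⟨F, hF, hgF⟩ g' ⟨F', hF', hgF'⟩ hcode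
  have hFF' : ∀ w, F w = F' w := fun w => Equiv.ext fun c => by
    have key := congrFun (congrFun hcode fun j : R => w j) c
    simp only [code, hgF, hgF', zero_add] at key
    rwa [hF _ w, hF' _ w] at key <;> intro j hj <;> simp [windowConfig, hj]
  exact Equiv.ext fun x => funext fun i => by rw [hgF, hgF', hFF']

variable [Fintype B] [DecidableEq B]

theorem IsSymbolMap.isLocalRule {g : Equiv.Perm (ℤ → Bool × B)} (hg : IsSymbolMap g) :
    IsLocalRule 0 {0} g := by
  obtain ⟨a, π, -, hgπ⟩ := hg
  refine ⟨fun u => if u 0 = a then π else 1, fun u v huv => ?_, fun x i => ?_⟩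
  · dsimp only
    rw [huv 0 (Finset.mem_singleton_self 0)]
  · by_cases hxa : (x i).1 = a <;> simp [hgπ x i, hxa]

theorem exists_isLocalRule_of_mem_genGroup {g : Equiv.Perm (ℤ → Bool × B)}
    (hg : g ∈ genGroup B) : ∃ n S, IsLocalRule n S g := by
  induction hg using Subgroup.closure_induction with
  | mem τ hτ =>
    rcases hτ with hτ | hτ
    · exact ⟨1, ∅, IsPartialShift.isLocalRule hτ⟩
    · exact ⟨0, {0}, IsSymbolMap.isLocalRule hτ⟩
  | one => exact ⟨0, ∅, .one⟩
  | mul _ _ _ _ ihg ihh =>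
    obtain ⟨n, S, hg⟩ := ihg
    obtain ⟨m, T, hh⟩ := ihh
    exact ⟨_, _, hg.mul hh⟩
  | inv _ _ ih =>
    obtain ⟨n, S, hg⟩ := ih
    exact ⟨_, _, hg.inv⟩

noncomputable def shift (g : genGroup B) : ℤ :=
  (exists_isLocalRule_of_mem_genGroup g.2).choose

theorem exists_isLocalRule_shift (g : genGroup B) :
    ∃ S, IsLocalRule (shift g) S (g : Equiv.Perm (ℤ → Bool × B)) :=
  (exists_isLocalRule_of_mem_genGroup g.2).choose_spec

section Shift

variable [Nonempty B]

theorem shift_eq {g : genGroup B} {n : ℤ} {S : Finset ℤ}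
    (hg : IsLocalRule n S (g : Equiv.Perm (ℤ → Bool × B))) : shift g = n :=
  (exists_isLocalRule_of_mem_genGroup g.2).choose_spec.choose_spec.shift_unique hg

noncomputable def shiftHom : genGroup B →* Multiplicative ℤ :=
  MonoidHom.mk' (fun g => .ofAdd (shift g)) fun g h => by
    obtain ⟨S, hg⟩ := exists_isLocalRule_shift g
    obtain ⟨T, hh⟩ := exists_isLocalRule_shift h
    rw [shift_eq (hg.mul hh), ofAdd_add]

theorem shiftHom_eq_ofAdd {g : genGroup B} {n : ℤ} {S : Finset ℤ}
    (hg : IsLocalRule n S (g : Equiv.Perm (ℤ → Bool × B))) : shiftHom g = .ofAdd n :=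
  congrArg Multiplicative.ofAdd (shift_eq hg)

theorem exists_isLocalRule_zero_of_subset_ker (A : Finset (genGroup B))
    (hA : ∀ a ∈ A, shiftHom a = 1) :
    ∃ R : Finset ℤ, ∀ a ∈ A, IsLocalRule 0 R (a : Equiv.Perm (ℤ → Bool × B)) := by
  choose S hS using exists_isLocalRule_shift (B := B)
  refine ⟨A.sup S, fun a ha => ?_⟩
  have hshift : shift a = 0 := ofAdd_eq_one.mp (hA a ha)
  exact (hshift ▸ hS a).mono (Finset.le_sup ha)

end Shift

end CellularGroup

open CellularGroup

/-- Let `B` be finite with `|B| ≥ 5` and let `G` be the group of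
bijections of `ℤ → Bool × B` generated by the partial shift `s` and the maps `f_{a,π}`.
Then there is a homomorphism `φ : G → ℤ` with `φ(s) = 1` and `φ(f_{a,π}) = 0` whose
kernel is locally finite; i.e. `G` is (locally finite)-by-`ℤ`. -/
theorem stmt12 {B : Type*} [Fintype B] [DecidableEq B]
    (hB : 5 ≤ Fintype.card B) :
    ∃ φ : ↥(genGroup B) →* Multiplicative ℤ,
      (∀ (σ : Equiv.Perm (ℤ → Bool × B)) (hσ : σ ∈ genGroup B),
        IsPartialShift σ → φ ⟨σ, hσ⟩ = Multiplicative.ofAdd 1) ∧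
      (∀ (σ : Equiv.Perm (ℤ → Bool × B)) (hσ : σ ∈ genGroup B),
        IsSymbolMap σ → φ ⟨σ, hσ⟩ = 1) ∧
      (∀ K : Subgroup ↥(genGroup B), K ≤ φ.ker → K.FG → (K : Set ↥(genGroup B)).Finite) := by
  have : Nonempty B := Fintype.card_pos_iff.mp (by omega)
  refine ⟨shiftHom, fun σ hσ h => shiftHom_eq_ofAdd h.isLocalRule,
    fun σ hσ h => shiftHom_eq_ofAdd h.isLocalRule, ?_⟩
  rintro K hK ⟨A, rfl⟩
  obtain ⟨R, hR⟩ := exists_isLocalRule_zero_of_subset_ker A fun a ha =>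
    hK (Subgroup.subset_closure ha)
  have hKR : Subgroup.closure (A : Set (genGroup B)) ≤
      (windowSubgroup B R).comap (genGroup B).subtype :=
    (Subgroup.closure_le _).mpr hR
  exact ((windowSubgroup_finite R).preimage Subtype.val_injective.injOn).subset hKR
end
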